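/- For every z₁, z₂ ∈ ℂ and every point x of Rep(Q̄,α), the real moment map satisfies μ_ℝ(z·x) = (|z₁|² − |z₂|²) μ_ℝ(x) − √−1 z₁\bar{z₂} μ_ℂ(x) − √−1 z₂\bar{z₁} μ_ℂ(x)†, where z = z₁ + z₂𝐣 acts by the quaternionic action and † denotes componentwise conjugate transpose (equality of tuples in ∏_{v∈Q₀} M_{α_v}(ℂ)). -/

import Mathlib

/-!
Both moment maps at `v` are sums over the arrows incident to `v` of per-arrow terms, and these
sums commute with linear combinations and with `ᴴ`. So the identity is one arrow at a time: for
`X' = z₁X - z₂Y†` and `Y' = z₁Y + z₂X†`, expanding gives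
`X'X'† - Y'†Y' = (|z₁|² - |z₂|²)(XX† - Y†Y) - 2z₁z̄₂ XY - 2z₂z̄₁ (XY)†`,
and the tail terms are the same identity for the pair `(Y, -X)`.
-/

open Matrix Finset

namespace QuiverMomentMaps

/-- Cast a matrix along equalities of its dimensions. -/
def castM {m n m' n' : ℕ} (hm : m = m') (hn : n = n')
    (M : Matrix (Fin m) (Fin n) ℂ) : Matrix (Fin m') (Fin n') ℂ :=
  Matrix.of fun i j => M (Fin.cast hm.symm i) (Fin.cast hn.symm j)

variable {V A : Type} [Fintype V] [Fintype A] [DecidableEq V]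

/-- A point of `Rep(Q̄,α)`: for each arrow `a` of the quiver `Q = (V, A, t, h)` a matrix
`x_a` of size `α(h a) × α(t a)` together with a matrix `x_{a*}` of size `α(t a) × α(h a)`. -/
abbrev RepX (t h : A → V) (α : V → ℕ) : Type :=
  (∀ a : A, Matrix (Fin (α (h a))) (Fin (α (t a))) ℂ) ×
    (∀ a : A, Matrix (Fin (α (t a))) (Fin (α (h a))) ℂ)

/-- The complex moment map `μ_ℂ`; its `v`-component is
`Σ_{a : h(a)=v} x_a x_{a*} − Σ_{a : t(a)=v} x_{a*} x_a`. -/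
noncomputable def muC (t h : A → V) (α : V → ℕ) (x : RepX t h α) (v : V) :
    Matrix (Fin (α v)) (Fin (α v)) ℂ :=
  (∑ a : A, if ha : h a = v then
      castM (congrArg α ha) (congrArg α ha) (x.1 a * x.2 a) else 0)
    - ∑ a : A, if ha : t a = v then
      castM (congrArg α ha) (congrArg α ha) (x.2 a * x.1 a) else 0

/-- The real moment map `μ_ℝ`; its `v`-component is
`(√−1/2)(Σ_{a : h(a)=v}(x_a x_a† − x_{a*}† x_{a*}) + Σ_{a : t(a)=v}(x_{a*} x_{a*}† − x_a† x_a))`. -/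
noncomputable def muR (t h : A → V) (α : V → ℕ) (x : RepX t h α) (v : V) :
    Matrix (Fin (α v)) (Fin (α v)) ℂ :=
  (Complex.I / 2) •
    ((∑ a : A, if ha : h a = v then
        castM (congrArg α ha) (congrArg α ha) (x.1 a * (x.1 a)ᴴ - (x.2 a)ᴴ * x.2 a) else 0)
      + ∑ a : A, if ha : t a = v then
        castM (congrArg α ha) (congrArg α ha) (x.2 a * (x.2 a)ᴴ - (x.1 a)ᴴ * x.1 a) else 0)

/-- The quaternionic action of `z = z₁ + z₂𝐣` on `Rep(Q̄,α)`:
`(z·x)_a = z₁x_a − z₂x_{a*}†` and `(z·x)_{a*} = z₁x_{a*} + z₂x_a†`. -/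
noncomputable def qact (t h : A → V) (α : V → ℕ) (z₁ z₂ : ℂ) (x : RepX t h α) : RepX t h α :=
  (fun a => z₁ • x.1 a - z₂ • (x.2 a)ᴴ, fun a => z₁ • x.2 a + z₂ • (x.1 a)ᴴ)

open ComplexConjugate

theorem quaternionic_mul_conjTranspose_sub {m n : Type} [Fintype n] (z₁ z₂ : ℂ)
    (X : Matrix m n ℂ) (Y : Matrix n m ℂ) :
    (z₁ • X - z₂ • Yᴴ) * (z₁ • X - z₂ • Yᴴ)ᴴ - (z₁ • Y + z₂ • Xᴴ)ᴴ * (z₁ • Y + z₂ • Xᴴ) =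
      ((Complex.normSq z₁ : ℂ) - (Complex.normSq z₂ : ℂ)) • (X * Xᴴ - Yᴴ * Y)
        - (2 * z₁ * conj z₂) • (X * Y) - (2 * z₂ * conj z₁) • (X * Y)ᴴ := by
  rw [← Complex.mul_conj z₁, ← Complex.mul_conj z₂]
  simp only [conjTranspose_sub, conjTranspose_add, conjTranspose_smul, conjTranspose_conjTranspose,
    conjTranspose_mul, Matrix.sub_mul, Matrix.mul_sub, Matrix.add_mul, Matrix.mul_add,
    Matrix.smul_mul, Matrix.mul_smul, starRingEnd_apply]
  module

/-- The action sends `(Y, -X)` to `(Y', -X')` where `(X', Y')` is the image of `(X, Y)`. -/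
theorem quaternionic_mul_conjTranspose_sub' {m n : Type} [Fintype m] (z₁ z₂ : ℂ)
    (X : Matrix m n ℂ) (Y : Matrix n m ℂ) :
    (z₁ • Y + z₂ • Xᴴ) * (z₁ • Y + z₂ • Xᴴ)ᴴ - (z₁ • X - z₂ • Yᴴ)ᴴ * (z₁ • X - z₂ • Yᴴ) =
      ((Complex.normSq z₁ : ℂ) - (Complex.normSq z₂ : ℂ)) • (Y * Yᴴ - Xᴴ * X)
        + (2 * z₁ * conj z₂) • (Y * X) + (2 * z₂ * conj z₁) • (Y * X)ᴴ := by
  have := quaternionic_mul_conjTranspose_sub z₁ z₂ Y (-X)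
  simp only [conjTranspose_neg, smul_neg, sub_neg_eq_add, Matrix.mul_neg, Matrix.neg_mul,
    neg_neg] at this
  rwa [show -(z₁ • X) + z₂ • Yᴴ = -(z₁ • X - z₂ • Yᴴ) by abel, conjTranspose_neg, Matrix.neg_mul,
    Matrix.mul_neg, neg_neg] at this

section ArrowSum

variable {Q₀ Q₁ : Type} [Fintype Q₁] [DecidableEq Q₀] (g : Q₁ → Q₀) (α : Q₀ → ℕ) (v : Q₀)

noncomputable def arrowSum (M : ∀ a, Matrix (Fin (α (g a))) (Fin (α (g a))) ℂ) :
    Matrix (Fin (α v)) (Fin (α v)) ℂ :=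
  ∑ a, if ha : g a = v then castM (congrArg α ha) (congrArg α ha) (M a) else 0

theorem arrowSum_sub (M N : ∀ a, Matrix (Fin (α (g a))) (Fin (α (g a))) ℂ) :
    arrowSum g α v (fun a => M a - N a) = arrowSum g α v M - arrowSum g α v N := by
  rw [arrowSum, arrowSum, arrowSum, ← sum_sub_distrib]
  congr! 1 with a
  split_ifs
  · rfl
  · rw [sub_zero]

theorem arrowSum_add (M N : ∀ a, Matrix (Fin (α (g a))) (Fin (α (g a))) ℂ) :
    arrowSum g α v (fun a => M a + N a) = arrowSum g α v M + arrowSum g α v N := by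
  rw [arrowSum, arrowSum, arrowSum, ← sum_add_distrib]
  congr! 1 with a
  split_ifs
  · rfl
  · rw [add_zero]

theorem arrowSum_smul (c : ℂ) (M : ∀ a, Matrix (Fin (α (g a))) (Fin (α (g a))) ℂ) :
    arrowSum g α v (fun a => c • M a) = c • arrowSum g α v M := by
  rw [arrowSum, arrowSum, smul_sum]
  congr! 1 with a
  split_ifs
  · rfl
  · rw [smul_zero]

theorem conjTranspose_arrowSum (M : ∀ a, Matrix (Fin (α (g a))) (Fin (α (g a))) ℂ) :
    (arrowSum g α v M)ᴴ = arrowSum g α v (fun a => (M a)ᴴ) := by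
  rw [arrowSum, arrowSum, conjTranspose_sum]
  congr! 1 with a
  split_ifs
  · rfl
  · rw [conjTranspose_zero]

end ArrowSum

section MomentMaps

variable {Q₀ Q₁ : Type} [Fintype Q₁] [DecidableEq Q₀] (t h : Q₁ → Q₀) (α : Q₀ → ℕ)
  (x : RepX t h α) (v : Q₀)

theorem muR_eq_arrowSum :
    muR t h α x v = (Complex.I / 2) •
      (arrowSum h α v (fun a => x.1 a * (x.1 a)ᴴ - (x.2 a)ᴴ * x.2 a)
        + arrowSum t α v (fun a => x.2 a * (x.2 a)ᴴ - (x.1 a)ᴴ * x.1 a)) :=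
  rfl

theorem muC_eq_arrowSum :
    muC t h α x v =
      arrowSum h α v (fun a => x.1 a * x.2 a) - arrowSum t α v (fun a => x.2 a * x.1 a) :=
  rfl

end MomentMaps

section QuaternionicAction

variable {Q₀ Q₁ : Type} {t h : Q₁ → Q₀} {α : Q₀ → ℕ} (z₁ z₂ : ℂ) (x : RepX t h α) (a : Q₁)

theorem qact_fst : (qact t h α z₁ z₂ x).1 a = z₁ • x.1 a - z₂ • (x.2 a)ᴴ :=
  rfl

theorem qact_snd : (qact t h α z₁ z₂ x).2 a = z₁ • x.2 a + z₂ • (x.1 a)ᴴ :=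
  rfl

end QuaternionicAction

/-- **Equation (3.1) of Bellamy–Schedler.**  For every `z₁, z₂ ∈ ℂ` and every point `x` of
`Rep(Q̄,α)`, the real moment map satisfies
`μ_ℝ(z·x) = (|z₁|² − |z₂|²) μ_ℝ(x) − √−1 z₁ z̄₂ μ_ℂ(x) − √−1 z₂ z̄₁ μ_ℂ(x)†`
(componentwise over the vertices, `†` being componentwise conjugate transpose). -/
theorem stmt_1 (t h : A → V) (α : V → ℕ) (z₁ z₂ : ℂ) (x : RepX t h α) (v : V) :
    muR t h α (qact t h α z₁ z₂ x) v =
      ((Complex.normSq z₁ : ℂ) - (Complex.normSq z₂ : ℂ)) • muR t h α x v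
        - (Complex.I * z₁ * (starRingEnd ℂ) z₂) • muC t h α x v
        - (Complex.I * z₂ * (starRingEnd ℂ) z₁) • (muC t h α x v)ᴴ := by
  -- two passes: `conjTranspose_sub` must not split the per-arrow terms before they are rewritten
  simp only [muR_eq_arrowSum, muC_eq_arrowSum, qact_fst, qact_snd,
    quaternionic_mul_conjTranspose_sub, quaternionic_mul_conjTranspose_sub']
  simp only [arrowSum_add, arrowSum_sub, arrowSum_smul, conjTranspose_sub, conjTranspose_arrowSum]
  module

end QuiverMomentMaps
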